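/- arXiv:1307.0215 — 4 statements merged into one kernel-verified Lean document; each statement's English description precedes it below -/
import Mathlib

section
/- Let A ∈ O₂(4) be a matrix that either commutes or anticommutes with J₁ (viewed as a matrix), and denote by r₁, r₂, r₃, r₄ ∈ ℝ⁴ the rows of A. Then there exist ε ∈ {−1, 1} and ξ ∈ ℝ such that r₂ = ε·J₁r₁, r₃ = cos ξ·J₂r₁ + sin ξ·J₃r₁, and r₄ = ε·(sin ξ·J₂r₁ − cos ξ·J₃r₁). -/
noncomputable section

/-- The complex structure J₁ of ℝ⁴. -/
def J1 (v : Fin 4 → ℝ) : Fin 4 → ℝ := ![-v 1, v 0, -v 3, v 2]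

/-- The product structure J₂ of ℝ⁴. -/
def J2 (v : Fin 4 → ℝ) : Fin 4 → ℝ := ![v 3, v 2, v 1, v 0]

/-- The product structure J₃ of ℝ⁴. -/
def J3 (v : Fin 4 → ℝ) : Fin 4 → ℝ := ![v 2, -v 3, v 0, -v 1]

/-- The matrix of the complex structure J₁. -/
def J1mat : Matrix (Fin 4) (Fin 4) ℝ := !![0,-1,0,0; 1,0,0,0; 0,0,0,-1; 0,0,1,0]

/-- The matrix ε = diag(1,1,−1,−1), defining the inner product of signature (2,2). -/
def eps : Matrix (Fin 4) (Fin 4) ℝ := !![1,0,0,0; 0,1,0,0; 0,0,-1,0; 0,0,0,-1]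

/-!
Since `A` preserves `⟨·,·⟩`, so does `Aᵀ`, i.e. the rows `rᵢ = A (i - 1)` are `ε`-orthonormal:
`⟨r₁,r₁⟩ = 1 = -⟨r₃,r₃⟩` and `r₃ ⊥ r₁, r₂`. Comparing rows of `A J₁ = ±J₁ A` gives
`r₂ = e J₁r₁` and `r₄ = e J₁r₃` with `e = ±1`. For `⟨v,v⟩ = 1` the vectors `v, J₁v, J₂v, J₃v`
form an `ε`-orthonormal basis of signature `(+,+,-,-)`, so `r₃ ⊥ r₁, J₁r₁` lies in the span of
`J₂r₁, J₃r₁`, with coefficients `(cos ξ, sin ξ)` because `⟨r₃,r₃⟩ = -1`.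
Finally `J₁J₂ = -J₃` and `J₁J₃ = J₂` give the formula for `r₄`.
-/

open Matrix

theorem Matrix.mul_mul_transpose_eq_of_transpose_mul_mul_eq {n R : Type*} [Fintype n]
    [DecidableEq n] [CommRing R] {A E : Matrix n n R} (hE : E * E = 1)
    (hA : Aᵀ * E * A = E) : A * E * Aᵀ = E := by
  have hleft : E * Aᵀ * E * A = 1 := by
    rw [Matrix.mul_assoc (E * Aᵀ), Matrix.mul_assoc E, ← Matrix.mul_assoc Aᵀ, hA, hE]
  have hright : A * E * Aᵀ * E = 1 := by
    simpa only [Matrix.mul_assoc] using mul_eq_one_comm.mp hleft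
  calc A * E * Aᵀ = A * E * Aᵀ * E * E := by rw [Matrix.mul_assoc _ E E, hE, Matrix.mul_one]
    _ = E := by rw [hright, Matrix.one_mul]

theorem Matrix.mul_mul_transpose_apply {n R : Type*} [Fintype n] [CommRing R]
    (A E : Matrix n n R) (i j : n) : (A * E * Aᵀ) i j = A i ⬝ᵥ E *ᵥ A j := by
  simp only [mul_apply, dotProduct, mulVec, transpose_apply, Finset.mul_sum, Finset.sum_mul]
  rw [Finset.sum_comm]
  exact Finset.sum_congr rfl fun _ _ => Finset.sum_congr rfl fun _ _ => by ring

theorem Real.exists_cos_eq_sin_eq {c d : ℝ} (h : c ^ 2 + d ^ 2 = 1) :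
    ∃ ξ : ℝ, Real.cos ξ = c ∧ Real.sin ξ = d := by
  set z : ℂ := ⟨c, d⟩
  have hz : ‖z‖ = 1 := by
    rw [Complex.norm_def, Complex.normSq_mk, ← sq, ← sq, h, Real.sqrt_one]
  have hz0 : z ≠ 0 := norm_ne_zero_iff.mp (by rw [hz]; exact one_ne_zero)
  exact ⟨Complex.arg z, by rw [Complex.cos_arg hz0, hz, div_one],
    by rw [Complex.sin_arg, hz, div_one]⟩

theorem eps_mul_eps : eps * eps = 1 := by
  ext i j; fin_cases i <;> fin_cases j <;> simp [eps]

theorem mul_J1mat_row (A : Matrix (Fin 4) (Fin 4) ℝ) (i : Fin 4) :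
    (A * J1mat) i = -J1 (A i) := by
  funext j; fin_cases j <;> simp [J1mat, J1, mul_apply, Fin.sum_univ_four]

theorem J1mat_mul_row_zero (A : Matrix (Fin 4) (Fin 4) ℝ) : (J1mat * A) 0 = -A 1 := by
  funext j; simp [J1mat, mul_apply, Fin.sum_univ_four]

theorem J1mat_mul_row_two (A : Matrix (Fin 4) (Fin 4) ℝ) : (J1mat * A) 2 = -A 3 := by
  funext j; simp [J1mat, mul_apply, Fin.sum_univ_four]

theorem rows_of_mul_J1mat_eq_smul {A : Matrix (Fin 4) (Fin 4) ℝ} {e : ℝ} (he : e * e = 1)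
    (h : A * J1mat = e • (J1mat * A)) : A 1 = e • J1 (A 0) ∧ A 3 = e • J1 (A 2) := by
  have hrow {i k : Fin 4} (hik : (J1mat * A) i = -A k) : A k = e • J1 (A i) := by
    have hi : -J1 (A i) = e • -A k := by rw [← mul_J1mat_row, ← hik, h]; rfl
    rw [smul_neg, neg_inj] at hi
    rw [hi, smul_smul, he, one_smul]
  exact ⟨hrow (J1mat_mul_row_zero A), hrow (J1mat_mul_row_two A)⟩

def indefInner (v w : Fin 4 → ℝ) : ℝ := v 0 * w 0 + v 1 * w 1 - v 2 * w 2 - v 3 * w 3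

theorem dotProduct_eps_mulVec (v w : Fin 4 → ℝ) : v ⬝ᵥ eps *ᵥ w = indefInner v w := by
  simp [indefInner, eps, dotProduct, mulVec, Fin.sum_univ_four, sub_eq_add_neg, add_assoc]

theorem indefInner_smul_right (v w : Fin 4 → ℝ) (a : ℝ) :
    indefInner v (a • w) = a * indefInner v w := by
  simp only [indefInner, Pi.smul_apply, smul_eq_mul]
  ring

theorem J1_smul_J2_add_smul_J3 (v : Fin 4 → ℝ) (c d : ℝ) :
    J1 (c • J2 v + d • J3 v) = d • J2 v - c • J3 v := by
  funext j
  fin_cases j <;>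
    simp only [J1, J2, J3, Pi.add_apply, Pi.sub_apply, Pi.smul_apply, smul_eq_mul, cons_val_zero,
      cons_val_one, cons_val_two, cons_val_three, head_cons, tail_cons, Fin.zero_eta, Fin.mk_one,
      Fin.reduceFinMk] <;>
    ring

theorem indefInner_smul_J2_add_smul_J3_self (v : Fin 4 → ℝ) (c d : ℝ) :
    indefInner (c • J2 v + d • J3 v) (c • J2 v + d • J3 v) =
      -((c ^ 2 + d ^ 2) * indefInner v v) := by
  simp only [indefInner, J2, J3, Pi.add_apply, Pi.smul_apply, smul_eq_mul, cons_val_zero,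
    cons_val_one, cons_val_two, cons_val_three, head_cons, tail_cons]
  ring

/-- Expansion in the basis `v, J₁v, J₂v, J₃v`, scaled by `⟨v,v⟩` so that it is a polynomial
identity. -/
theorem indefInner_self_smul_eq (v w : Fin 4 → ℝ) :
    indefInner v v • w = indefInner w v • v + indefInner w (J1 v) • J1 v
      - indefInner w (J2 v) • J2 v - indefInner w (J3 v) • J3 v := by
  funext j
  fin_cases j <;>
    simp only [indefInner, J1, J2, J3, Pi.add_apply, Pi.sub_apply, Pi.smul_apply, smul_eq_mul,
      cons_val_zero, cons_val_one, cons_val_two, cons_val_three, head_cons, tail_cons,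
      Fin.zero_eta, Fin.mk_one, Fin.reduceFinMk] <;>
    ring

theorem exists_eq_cos_smul_J2_add_sin_smul_J3 {v w : Fin 4 → ℝ} (hv : indefInner v v = 1)
    (hw : indefInner w w = -1) (hwv : indefInner w v = 0) (hwJv : indefInner w (J1 v) = 0) :
    ∃ ξ : ℝ, w = Real.cos ξ • J2 v + Real.sin ξ • J3 v := by
  have hdecomp : w = (-indefInner w (J2 v)) • J2 v + (-indefInner w (J3 v)) • J3 v := by
    simpa [hv, hwv, hwJv, sub_eq_add_neg] using indefInner_self_smul_eq v w
  set c := -indefInner w (J2 v)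
  set d := -indefInner w (J3 v)
  have hcd : c ^ 2 + d ^ 2 = 1 := by
    have := indefInner_smul_J2_add_smul_J3_self v c d
    rw [← hdecomp, hw, hv] at this
    linarith
  obtain ⟨ξ, hc, hs⟩ := Real.exists_cos_eq_sin_eq hcd
  exact ⟨ξ, by rw [hc, hs, ← hdecomp]⟩

theorem rows_of_indefinite_orthogonal_matrix (A : Matrix (Fin 4) (Fin 4) ℝ)
    (hA : A.transpose * eps * A = eps)
    (hcomm : A * J1mat = J1mat * A ∨ A * J1mat = -(J1mat * A)) :
    ∃ e : ℝ, (e = -1 ∨ e = 1) ∧ ∃ ξ : ℝ,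
      A 1 = e • J1 (A 0) ∧
      A 2 = Real.cos ξ • J2 (A 0) + Real.sin ξ • J3 (A 0) ∧
      A 3 = e • (Real.sin ξ • J2 (A 0) - Real.cos ξ • J3 (A 0)) := by
  obtain ⟨e, he, h1, h3⟩ :
      ∃ e : ℝ, (e = -1 ∨ e = 1) ∧ A 1 = e • J1 (A 0) ∧ A 3 = e • J1 (A 2) := by
    rcases hcomm with h | h
    · exact ⟨1, Or.inr rfl, rows_of_mul_J1mat_eq_smul (by norm_num) (by rwa [one_smul])⟩
    · exact ⟨-1, Or.inl rfl, rows_of_mul_J1mat_eq_smul (by norm_num) (by rwa [neg_one_smul])⟩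
  have hrows : A * eps * Aᵀ = eps := mul_mul_transpose_eq_of_transpose_mul_mul_eq eps_mul_eps hA
  have hgram (i j : Fin 4) : indefInner (A i) (A j) = eps i j := by
    rw [← hrows, mul_mul_transpose_apply, dotProduct_eps_mulVec]
  have he0 : e ≠ 0 := by rcases he with rfl | rfl <;> norm_num
  have h21 : indefInner (A 2) (J1 (A 0)) = 0 := by
    have h21' := hgram 2 1
    rw [h1, indefInner_smul_right] at h21'
    simpa [eps, he0] using h21'
  obtain ⟨ξ, h2⟩ := exists_eq_cos_smul_J2_add_sin_smul_J3 (by simpa [eps] using hgram 0 0)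
    (by simpa [eps] using hgram 2 2) (by simpa [eps] using hgram 2 0) h21
  refine ⟨e, he, ξ, h1, h2, ?_⟩
  rw [h3, h2, J1_smul_J2_add_smul_J3]
end
end

section
/- The Hopf map is constant along the circle fibers generated by the Hopf vector field: for every v ∈ ℝ⁴ and every t ∈ ℝ, ψ(cos t · v + sin t · J₁v) = ψ(v); consequently, for every v ∈ ℝ⁴ the Fréchet derivative of ψ at v applied to the vector J₁v is zero (i.e. the vector field X₁(v) = J₁v is vertical for ψ). -/
noncomputable section

/-- The Hopf map in real coordinates. -/
def hopf (v : Fin 4 → ℝ) : Fin 3 → ℝ :=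
  ![v 0 * v 2 + v 1 * v 3, v 1 * v 2 - v 0 * v 3, (v 0 ^ 2 + v 1 ^ 2 + v 2 ^ 2 + v 3 ^ 2) / 2]

/-! Each component of `hopf` is a quadratic form `Q` with `Q (J1 v) = Q v` whose polarization
vanishes on `(v, J1 v)`, so `Q (cos t • v + sin t • J1 v) = (cos² t + sin² t) Q v`. The circle
`t ↦ cos t • v + sin t • J1 v` has velocity `J1 v` at `t = 0`, and `hopf` is constant on it, so the
chain rule gives `fderiv ℝ hopf v (J1 v) = 0`. -/

theorem fderiv_apply_eq_zero_of_comp_eq_const {𝕜 E F : Type*} [NontriviallyNormedField 𝕜]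
    [NormedAddCommGroup E] [NormedSpace 𝕜 E] [NormedAddCommGroup F] [NormedSpace 𝕜 F]
    {f : E → F} {γ : 𝕜 → E} {w : E} {s : 𝕜} (hf : DifferentiableAt 𝕜 f (γ s))
    (hγ : HasDerivAt γ w s) (hconst : ∀ t, f (γ t) = f (γ s)) :
    fderiv 𝕜 f (γ s) w = 0 := by
  have hcomp : HasDerivAt (f ∘ γ) (fderiv 𝕜 f (γ s) w) s :=
    hf.hasFDerivAt.comp_hasDerivAt s hγ
  have hf_comp : f ∘ γ = fun _ => f (γ s) := funext hconst
  rw [hf_comp] at hcomp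
  exact hcomp.unique (hasDerivAt_const s _)

theorem hasDerivAt_cos_smul_add_sin_smul {E : Type*} [NormedAddCommGroup E] [NormedSpace ℝ E]
    (v w : E) : HasDerivAt (fun t : ℝ => Real.cos t • v + Real.sin t • w) w 0 := by
  simpa using ((Real.hasDerivAt_cos 0).smul_const v).fun_add ((Real.hasDerivAt_sin 0).smul_const w)

theorem hopf_cos_smul_add_sin_smul_J1 (v : Fin 4 → ℝ) (t : ℝ) :
    hopf (Real.cos t • v + Real.sin t • J1 v) = hopf v := by
  have h := Real.sin_sq_add_cos_sq t
  ext i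
  fin_cases i <;> simp [hopf, J1]
  · linear_combination (v 0 * v 2 + v 1 * v 3) * h
  · linear_combination (v 1 * v 2 - v 0 * v 3) * h
  · linear_combination (v 0 ^ 2 + v 1 ^ 2 + v 2 ^ 2 + v 3 ^ 2) * h

theorem differentiable_hopf : Differentiable ℝ hopf := by
  rw [differentiable_pi]
  intro i
  fin_cases i <;> simp [hopf] <;> fun_prop

theorem hopf_constant_along_fibers :
    (∀ (v : Fin 4 → ℝ) (t : ℝ), hopf (Real.cos t • v + Real.sin t • J1 v) = hopf v) ∧
    (∀ v : Fin 4 → ℝ, fderiv ℝ hopf v (J1 v) = 0) := by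
  refine ⟨hopf_cos_smul_add_sin_smul_J1, fun v => ?_⟩
  simpa using fderiv_apply_eq_zero_of_comp_eq_const (s := 0) (differentiable_hopf _)
    (hasDerivAt_cos_smul_add_sin_smul v (J1 v)) (by simp [hopf_cos_smul_add_sin_smul_J1])
end
end

section
/- Integration of the Codazzi equation in the case B < 0: let B < 0 and c ≠ 0 be real constants, I ⊆ ℝ an open interval, and λ : I → ℝ a differentiable function satisfying λ'(u) + c·(λ(u)² + 4B) = 0 for all u ∈ I. If |λ(u₀)| < 2√(−B) for some u₀ ∈ I, then there exists a constant η ∈ ℝ such that λ(u) = 2√(−B)·tanh(η + 2c√(−B)·u) for all u ∈ I. -/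
/-! With `a = 2√(-B)` the equation reads `λ' = c (a² - λ²)`, which is solved by
`u ↦ a tanh (η + c a u)` for every `η`; since `|λ u₀| < a`, the choice
`η = artanh (λ u₀ / a) - c a u₀` matches `λ` at `u₀`. The right-hand side is a polynomial in `λ`,
hence locally Lipschitz, so uniqueness for the Cauchy problem forces the two solutions to agree on
the whole interval. -/

open Real Set

section Uniqueness

variable {E : Type*} [NormedAddCommGroup E] [NormedSpace ℝ E] {v : E → E} {f g : ℝ → E}

theorem LocallyLipschitz.eqOn_of_hasDerivAt (hv : LocallyLipschitz v) {s : Set ℝ}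
    (hs : s.OrdConnected) (hf : ∀ t ∈ s, HasDerivAt f (v (f t)) t)
    (hg : ∀ t ∈ s, HasDerivAt g (v (g t)) t) {t₀ : ℝ} (ht₀ : t₀ ∈ s) (heq : f t₀ = g t₀) :
    EqOn f g s := by
  intro t ht
  have hlocal : ∀ {a b : ℝ}, Icc a b ⊆ s → ContinuousOn f (Icc a b) ∧ ContinuousOn g (Icc a b) ∧
      ∃ K, LipschitzOnWith K v (f '' Icc a b ∪ g '' Icc a b) := by
    intro a b hab
    have hfc : ContinuousOn f (Icc a b) := fun x hx =>
      (hf x (hab hx)).continuousAt.continuousWithinAt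
    have hgc : ContinuousOn g (Icc a b) := fun x hx =>
      (hg x (hab hx)).continuousAt.continuousWithinAt
    exact ⟨hfc, hgc, hv.locallyLipschitzOn.exists_lipschitzOnWith_of_compact
      ((isCompact_Icc.image_of_continuousOn hfc).union (isCompact_Icc.image_of_continuousOn hgc))⟩
  rcases le_total t₀ t with hle | hle
  · have hsub := hs.out ht₀ ht
    obtain ⟨hfc, hgc, K, hK⟩ := hlocal hsub
    exact ODE_solution_unique_of_mem_Icc_right (fun _ _ => hK) hfc
      (fun x hx => (hf x (hsub (Ico_subset_Icc_self hx))).hasDerivWithinAt)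
      (fun x hx => .inl (mem_image_of_mem f (Ico_subset_Icc_self hx))) hgc
      (fun x hx => (hg x (hsub (Ico_subset_Icc_self hx))).hasDerivWithinAt)
      (fun x hx => .inr (mem_image_of_mem g (Ico_subset_Icc_self hx))) heq ⟨hle, le_rfl⟩
  · have hsub := hs.out ht ht₀
    obtain ⟨hfc, hgc, K, hK⟩ := hlocal hsub
    exact ODE_solution_unique_of_mem_Icc_left (fun _ _ => hK) hfc
      (fun x hx => (hf x (hsub (Ioc_subset_Icc_self hx))).hasDerivWithinAt)
      (fun x hx => .inl (mem_image_of_mem f (Ioc_subset_Icc_self hx))) hgc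
      (fun x hx => (hg x (hsub (Ioc_subset_Icc_self hx))).hasDerivWithinAt)
      (fun x hx => .inr (mem_image_of_mem g (Ioc_subset_Icc_self hx))) heq ⟨le_rfl, hle⟩

end Uniqueness

theorem Real.hasDerivAt_tanh (x : ℝ) : HasDerivAt tanh (1 - tanh x ^ 2) x := by
  have hcosh : cosh x ≠ 0 := (cosh_pos x).ne'
  have h := (hasDerivAt_sinh x).div (hasDerivAt_cosh x) hcosh
  rw [show sinh / cosh = tanh from funext fun y => (tanh_eq_sinh_div_cosh y).symm] at h
  refine h.congr_deriv ?_
  rw [tanh_eq_sinh_div_cosh]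
  field_simp

theorem hasDerivAt_const_mul_tanh_affine (a b η u : ℝ) :
    HasDerivAt (fun u => a * tanh (η + b * u)) (a * b * (1 - tanh (η + b * u) ^ 2)) u := by
  have h := ((hasDerivAt_tanh (η + b * u)).comp u
    (((hasDerivAt_id u).const_mul b).const_add η)).const_mul a
  refine h.congr_deriv ?_
  simp only [mul_one]
  ring

theorem codazzi_integration_B_neg_general (B c : ℝ) (hB : B < 0) (I : Set ℝ)
    (hIconn : I.OrdConnected)
    (lam : ℝ → ℝ)
    (hode : ∀ u ∈ I, HasDerivAt lam (-(c * (lam u ^ 2 + 4 * B))) u)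
    (u₀ : ℝ) (hu₀ : u₀ ∈ I) (hlam₀ : |lam u₀| < 2 * Real.sqrt (-B)) :
    ∃ η : ℝ, ∀ u ∈ I,
      lam u = 2 * Real.sqrt (-B) * Real.tanh (η + 2 * c * Real.sqrt (-B) * u) := by
  set a := 2 * √(-B)
  set b := 2 * c * √(-B)
  have hsq : √(-B) ^ 2 = -B := sq_sqrt (by linarith)
  have ha : 0 < a := by have := sqrt_pos.2 (neg_pos.2 hB); positivity
  have hlam₀' : lam u₀ / a ∈ Ioo (-1) 1 := by
    rw [mem_Ioo, ← abs_lt, abs_div, abs_of_pos ha, div_lt_one ha]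
    exact hlam₀
  refine ⟨artanh (lam u₀ / a) - b * u₀, ?_⟩
  have hv : LocallyLipschitz fun y : ℝ => -(c * (y ^ 2 + 4 * B)) :=
    ContDiff.locallyLipschitz (𝕂 := ℝ) (by fun_prop)
  refine hv.eqOn_of_hasDerivAt hIconn hode (fun u _ => ?_) hu₀ ?_
  · refine (hasDerivAt_const_mul_tanh_affine a b _ u).congr_deriv ?_
    linear_combination 4 * c * hsq
  · simp only [sub_add_cancel, tanh_artanh hlam₀']
    field_simp

theorem codazzi_integration_B_neg (B c : ℝ) (hB : B < 0) (hc : c ≠ 0) (I : Set ℝ)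
    (hIopen : IsOpen I) (hIconn : I.OrdConnected)
    (lam : ℝ → ℝ)
    (hode : ∀ u ∈ I, HasDerivAt lam (-(c * (lam u ^ 2 + 4 * B))) u)
    (u₀ : ℝ) (hu₀ : u₀ ∈ I) (hlam₀ : |lam u₀| < 2 * Real.sqrt (-B)) :
    ∃ η : ℝ, ∀ u ∈ I,
      lam u = 2 * Real.sqrt (-B) * Real.tanh (η + 2 * c * Real.sqrt (-B) * u) :=
  codazzi_integration_B_neg_general B c hB I hIconn lam hode u₀ hu₀ hlam₀
end

section
/- Solution of the linear system arising in the B > 0 classification: let τ > 0 and ϑ ∈ (0,π/2) with B = (τ²+1)cos²ϑ − 1 > 0, and set ã = −τ⁻²·sin²ϑ·B, b̃ = −2τ⁻¹·B, α₁ = (τ·√B·cos ϑ + B)/τ, α₂ = (τ·√B·cos ϑ − B)/τ, g₁₁ = (√B − τ·cos ϑ)/(2√B), g₃₃ = (√B + τ·cos ϑ)/(2√B), and I = ã·(b̃ − τ⁻¹·sin²ϑ). If real numbers x, y satisfy α₁·g₁₁·x − α₂·g₃₃·y = τ⁻¹·sin²ϑ and α₁³·g₁₁·x − α₂³·g₃₃·y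 = I, then x = y = −1. -/
/-! With `s = √B`, `c = cos ϑ` and `sin²ϑ = τ²c² - B`, one finds `α₁ g₁₁ = -sin²ϑ / (2τ) = -α₂ g₃₃`
and `α₁² + α₂² = 2B(τ²c² + B)/τ²`, from which `(-1, -1)` is seen to solve the system. It is the
only solution because the determinant `α₁ g₁₁ α₂ g₃₃ (α₁² - α₂²)` does not vanish, as
`α₁² - α₂² = 4 s c B / τ`. -/

theorem eq_and_eq_of_linear_system {K : Type*} [Field K] {p q u v x y x₀ y₀ : K}
    (hp : p ≠ 0) (hq : q ≠ 0) (huv : u ≠ v)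
    (h₁ : p * x - q * y = p * x₀ - q * y₀)
    (h₂ : p * u * x - q * v * y = p * u * x₀ - q * v * y₀) :
    x = x₀ ∧ y = y₀ := by
  have hdet : q * (v - u) * (y - y₀) = 0 := by linear_combination u * h₁ - h₂
  have hy : y = y₀ := by
    simpa [hq, sub_ne_zero.2 huv.symm, sub_eq_zero] using hdet
  subst hy
  exact ⟨mul_left_cancel₀ hp (by linear_combination h₁), rfl⟩

theorem sin_sq_eq_mul_cos_sq_sub (τ ϑ : ℝ) :
    Real.sin ϑ ^ 2 = τ ^ 2 * Real.cos ϑ ^ 2 - ((τ ^ 2 + 1) * Real.cos ϑ ^ 2 - 1) := by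
  linear_combination Real.sin_sq_add_cos_sq ϑ

section

variable {τ c s B : ℝ}

theorem alpha₁_mul_g₁₁ (hτ : τ ≠ 0) (hs : s ≠ 0) (hsB : s ^ 2 = B) :
    (τ * s * c + B) / τ * ((s - τ * c) / (2 * s)) = -(τ ^ 2 * c ^ 2 - B) / (2 * τ) := by
  field_simp
  linear_combination τ * c * hsB

theorem alpha₂_mul_g₃₃ (hτ : τ ≠ 0) (hs : s ≠ 0) (hsB : s ^ 2 = B) :
    (τ * s * c - B) / τ * ((s + τ * c) / (2 * s)) = (τ ^ 2 * c ^ 2 - B) / (2 * τ) := by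
  field_simp
  linear_combination τ * c * hsB

theorem alpha₁_sq_add_alpha₂_sq (hτ : τ ≠ 0) (hsB : s ^ 2 = B) :
    ((τ * s * c + B) / τ) ^ 2 + ((τ * s * c - B) / τ) ^ 2 = 2 * B * (τ ^ 2 * c ^ 2 + B) / τ ^ 2 := by
  field_simp
  linear_combination 2 * τ ^ 2 * c ^ 2 * hsB

theorem alpha₁_sq_sub_alpha₂_sq (hτ : τ ≠ 0) :
    ((τ * s * c + B) / τ) ^ 2 - ((τ * s * c - B) / τ) ^ 2 = 4 * s * c * B / τ := by
  field_simp
  ring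

end

theorem linear_system_solution_B_pos (τ ϑ B a b α₁ α₂ g₁₁ g₃₃ I x y : ℝ)
    (hτ : 0 < τ) (hϑ : ϑ ∈ Set.Ioo 0 (Real.pi / 2))
    (hB : B = (τ ^ 2 + 1) * Real.cos ϑ ^ 2 - 1) (hBpos : 0 < B)
    (ha : a = -(Real.sin ϑ ^ 2 * B) / τ ^ 2) (hb : b = -(2 * B) / τ)
    (hα₁ : α₁ = (τ * Real.sqrt B * Real.cos ϑ + B) / τ)
    (hα₂ : α₂ = (τ * Real.sqrt B * Real.cos ϑ - B) / τ)
    (hg₁₁ : g₁₁ = (Real.sqrt B - τ * Real.cos ϑ) / (2 * Real.sqrt B))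
    (hg₃₃ : g₃₃ = (Real.sqrt B + τ * Real.cos ϑ) / (2 * Real.sqrt B))
    (hI : I = a * (b - Real.sin ϑ ^ 2 / τ))
    (heq1 : α₁ * g₁₁ * x - α₂ * g₃₃ * y = Real.sin ϑ ^ 2 / τ)
    (heq2 : α₁ ^ 3 * g₁₁ * x - α₂ ^ 3 * g₃₃ * y = I) :
    x = -1 ∧ y = -1 := by
  have hc : 0 < Real.cos ϑ := Real.cos_pos_of_mem_Ioo ⟨by linarith [hϑ.1, Real.pi_pos], hϑ.2⟩
  have hsin : 0 < Real.sin ϑ := Real.sin_pos_of_pos_of_lt_pi hϑ.1 (by linarith [hϑ.2, Real.pi_pos])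
  have hs : 0 < Real.sqrt B := Real.sqrt_pos.2 hBpos
  have hsB : Real.sqrt B ^ 2 = B := Real.sq_sqrt hBpos.le
  have hS : τ ^ 2 * Real.cos ϑ ^ 2 - B = Real.sin ϑ ^ 2 := (hB ▸ sin_sq_eq_mul_cos_sq_sub τ ϑ).symm
  have hp : α₁ * g₁₁ = -Real.sin ϑ ^ 2 / (2 * τ) := by
    rw [hα₁, hg₁₁, alpha₁_mul_g₁₁ hτ.ne' hs.ne' hsB, hS]
  have hq : α₂ * g₃₃ = Real.sin ϑ ^ 2 / (2 * τ) := by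
    rw [hα₂, hg₃₃, alpha₂_mul_g₃₃ hτ.ne' hs.ne' hsB, hS]
  have hsum : α₁ ^ 2 + α₂ ^ 2 = 2 * B * (τ ^ 2 * Real.cos ϑ ^ 2 + B) / τ ^ 2 := by
    rw [hα₁, hα₂, alpha₁_sq_add_alpha₂_sq hτ.ne' hsB]
  have huv : α₁ ^ 2 ≠ α₂ ^ 2 := by
    rw [← sub_ne_zero, hα₁, hα₂, alpha₁_sq_sub_alpha₂_sq hτ.ne']
    positivity
  refine eq_and_eq_of_linear_system (p := α₁ * g₁₁) (q := α₂ * g₃₃)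
    (x₀ := -1) (y₀ := -1) ?_ ?_ huv ?_ ?_
  · rw [hp, neg_div, neg_ne_zero]; positivity
  · rw [hq]; positivity
  · rw [heq1, hp, hq]; ring
  · rw [hI, ha, hb] at heq2
    linear_combination heq2 + α₁ ^ 2 * hp - α₂ ^ 2 * hq - Real.sin ϑ ^ 2 / (2 * τ) * hsum
      - Real.sin ϑ ^ 2 * B / τ ^ 3 * hS
end
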